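/- For q ∈ (0,1), let ι_q(X_q) ⊆ ℝ be the image of X_q under ι_q(x) = d_q(1,x) − π/2; concretely, ι_q(X_q) = { ∑_{k=0}^{n−1} 1/ρ_q(k) − π/2 : n ∈ ℕ₀ } ∪ { ∑_{k=0}^∞ 1/ρ_q(k) − π/2 }. Then the Hausdorff distance in ℝ between ι_q(X_q) and the interval [−π/2, π/2] tends to 0 as q → 1⁻. -/

import Mathlib

/-- The image `ι_q(X_q) ⊆ ℝ` of `X_q` under `ι_q(x) = d_q(1,x) − π/2`; concretely it is
`{ ∑_{k=0}^{n−1} 1/ρ_q(k) − π/2 : n ∈ ℕ₀ } ∪ { ∑_{k=0}^∞ 1/ρ_q(k) − π/2 }`, where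
`1/ρ_q(k) = (1−q²)·q^k/√(1 − q^{2(k+1)})`. -/
noncomputable def iotaImage (q : ℝ) : Set ℝ :=
  {y : ℝ | ∃ n : ℕ,
      y = (∑ k ∈ Finset.range n,
            (1 - q ^ 2) * q ^ k / Real.sqrt (1 - q ^ (2 * (k + 1)))) - Real.pi / 2} ∪
  {(∑' k : ℕ, (1 - q ^ 2) * q ^ k / Real.sqrt (1 - q ^ (2 * (k + 1)))) - Real.pi / 2}

/-! Writing `1/ρ_q(k) = (1+q)(q^k − q^{k+1})/√(1 − (q^{k+1})²)`, the mean value theorem for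
`arcsin` squeezes it between `(1+q)(arcsin q^{k+1} − arcsin q^{k+2})` and
`(1+q)(arcsin q^k − arcsin q^{k+1})`. Telescoping, the full sum `T` lies in
`[(1+q) arcsin q, (1+q) π/2] ⊆ [0, π]`. The partial sums climb from `0` to `T` in steps of at most
`√(1 − q²)`, so every point of `[0, π]` is within `√(1 − q²) + (π − T)` of them, and this bound
tends to `0` as `q → 1`. Translating by `−π/2` gives the claim. -/

open Real Set Metric Filter Topology Finset

theorem Real.differentiableOn_arcsin_interior_Icc {a b : ℝ} (ha : -1 ≤ a) (hb : b ≤ 1) :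
    DifferentiableOn ℝ arcsin (interior (Icc a b)) :=
  differentiableOn_arcsin.mono fun x hx => by
    rw [interior_Icc] at hx
    simp only [mem_compl_iff, mem_insert_iff, mem_singleton_iff, not_or]
    constructor <;> linarith [hx.1, hx.2]

theorem Real.sub_div_sqrt_le_arcsin_sub {a b : ℝ} (ha : 0 ≤ a) (hab : a ≤ b) (hb : b ≤ 1) :
    (b - a) / √(1 - a ^ 2) ≤ arcsin b - arcsin a := by
  have hderiv : ∀ x ∈ interior (Icc a b), 1 / √(1 - a ^ 2) ≤ deriv arcsin x := by
    rw [interior_Icc]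
    rintro x ⟨hax, hxb⟩
    rw [deriv_arcsin]
    exact one_div_le_one_div_of_le (sqrt_pos.2 (by nlinarith)) (sqrt_le_sqrt (by nlinarith))
  have := (convex_Icc a b).mul_sub_le_image_sub_of_le_deriv continuous_arcsin.continuousOn
    (differentiableOn_arcsin_interior_Icc (by linarith) hb) hderiv a (left_mem_Icc.2 hab) b
    (right_mem_Icc.2 hab) hab
  rwa [one_div_mul_eq_div] at this

theorem Real.arcsin_sub_le_sub_div_sqrt {a b : ℝ} (ha : 0 ≤ a) (hab : a ≤ b) (hb : b < 1) :
    arcsin b - arcsin a ≤ (b - a) / √(1 - b ^ 2) := by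
  have hderiv : ∀ x ∈ interior (Icc a b), deriv arcsin x ≤ 1 / √(1 - b ^ 2) := by
    rw [interior_Icc]
    rintro x ⟨hax, hxb⟩
    rw [deriv_arcsin]
    exact one_div_le_one_div_of_le (sqrt_pos.2 (by nlinarith)) (sqrt_le_sqrt (by nlinarith))
  have := (convex_Icc a b).image_sub_le_mul_sub_of_deriv_le continuous_arcsin.continuousOn
    (differentiableOn_arcsin_interior_Icc (by linarith) hb.le) hderiv a (left_mem_Icc.2 hab) b
    (right_mem_Icc.2 hab) hab
  rwa [one_div_mul_eq_div] at this

theorem hasSum_sub_succ_of_antitone {f : ℕ → ℝ} {l : ℝ} (hf : Antitone f)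
    (hl : Tendsto f atTop (𝓝 l)) : HasSum (fun k => f k - f (k + 1)) (f 0 - l) := by
  refine (hasSum_iff_tendsto_nat_of_nonneg (fun k => sub_nonneg.2 (hf k.le_succ)) _).2 ?_
  simp only [sum_range_sub']
  exact tendsto_const_nhds.sub hl

theorem exists_dist_partialSum_le {a : ℕ → ℝ} {ε y : ℝ} (h0 : ∀ k, 0 ≤ a k)
    (hε : ∀ k, a k ≤ ε) (hy : 0 ≤ y) {n : ℕ} (hyn : y ≤ ∑ k ∈ range n, a k) :
    ∃ m, dist y (∑ k ∈ range m, a k) ≤ ε := by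
  induction n with
  | zero =>
    refine ⟨0, ?_⟩
    rw [sum_range_zero] at hyn ⊢
    rw [le_antisymm hyn hy, dist_self]
    exact (h0 0).trans (hε 0)
  | succ n ih =>
    by_cases hyS : y ≤ ∑ k ∈ range n, a k
    · exact ih hyS
    · refine ⟨n + 1, ?_⟩
      rw [sum_range_succ] at hyn ⊢
      rw [Real.dist_eq, abs_le]
      constructor <;> linarith [hε n]

theorem hausdorffDist_partialSums_Icc_le {a : ℕ → ℝ} {ε L : ℝ} (h0 : ∀ k, 0 ≤ a k)
    (hε : ∀ k, a k ≤ ε) (hs : Summable a) (hL : ∑' k, a k ≤ L) :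
    hausdorffDist (range (fun n => ∑ k ∈ Finset.range n, a k) ∪ {∑' k, a k}) (Icc 0 L) ≤
      ε + (L - ∑' k, a k) := by
  set S := fun n => ∑ k ∈ Finset.range n, a k
  set T := ∑' k, a k
  have hST (n : ℕ) : S n ≤ T := hs.sum_le_tsum _ fun k _ => h0 k
  have hS0 (n : ℕ) : 0 ≤ S n := sum_nonneg fun k _ => h0 k
  have hε0 : 0 ≤ ε := (h0 0).trans (hε 0)
  have hsub : range S ∪ {T} ⊆ Icc 0 L := by
    rintro _ (⟨n, rfl⟩ | rfl)
    · exact ⟨hS0 n, (hST n).trans hL⟩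
    · exact ⟨(hS0 0).trans (hST 0), hL⟩
  refine hausdorffDist_le_of_infDist (by linarith) (fun x hx => ?_) (fun y hy => ?_)
  · rw [infDist_zero_of_mem (hsub hx)]
    linarith
  by_cases hyS : ∃ n, y ≤ S n
  · obtain ⟨n, hn⟩ := hyS
    obtain ⟨m, hm⟩ := exists_dist_partialSum_le h0 hε hy.1 hn
    calc infDist y (range S ∪ {T}) ≤ dist y (S m) := infDist_le_dist_of_mem (Or.inl ⟨m, rfl⟩)
      _ ≤ ε + (L - T) := by linarith
  · push Not at hyS
    have hTy : T ≤ y := le_of_tendsto' hs.hasSum.tendsto_sum_nat fun n => (hyS n).le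
    calc infDist y (range S ∪ {T}) ≤ dist y T := infDist_le_dist_of_mem (Or.inr rfl)
      _ = y - T := by rw [Real.dist_eq, abs_of_nonneg (by linarith)]
      _ ≤ ε + (L - T) := by linarith [hy.2]

noncomputable def invRho (q : ℝ) (k : ℕ) : ℝ :=
  (1 - q ^ 2) * q ^ k / √(1 - q ^ (2 * (k + 1)))

theorem invRho_eq (q : ℝ) (k : ℕ) :
    invRho q k = (1 + q) * ((q ^ k - q ^ (k + 1)) / √(1 - (q ^ (k + 1)) ^ 2)) := by
  rw [invRho, ← pow_mul, mul_comm (k + 1), pow_succ, mul_div_assoc']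
  ring_nf

section invRho

variable {q : ℝ}

theorem invRho_nonneg (hq0 : 0 ≤ q) (hq1 : q ≤ 1) (k : ℕ) : 0 ≤ invRho q k :=
  div_nonneg (mul_nonneg (by nlinarith) (pow_nonneg hq0 k)) (sqrt_nonneg _)

theorem invRho_le_sqrt (hq0 : 0 ≤ q) (hq1 : q < 1) (k : ℕ) : invRho q k ≤ √(1 - q ^ 2) := by
  have hq2 : 0 < 1 - q ^ 2 := by nlinarith
  calc invRho q k ≤ (1 - q ^ 2) / √(1 - q ^ (2 * (k + 1))) :=
        div_le_div_of_nonneg_right (mul_le_of_le_one_right hq2.le (pow_le_one₀ hq0 hq1.le))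
          (sqrt_nonneg _)
    _ ≤ (1 - q ^ 2) / √(1 - q ^ 2) := by
        refine div_le_div_of_nonneg_left hq2.le (sqrt_pos.2 hq2) (sqrt_le_sqrt ?_)
        linarith [pow_le_pow_of_le_one hq0 hq1.le (show 2 ≤ 2 * (k + 1) by omega)]
    _ = √(1 - q ^ 2) := div_sqrt

theorem invRho_le_mul_arcsin_sub (hq0 : 0 ≤ q) (hq1 : q ≤ 1) (k : ℕ) :
    invRho q k ≤ (1 + q) * (arcsin (q ^ k) - arcsin (q ^ (k + 1))) := by
  rw [invRho_eq]
  gcongr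
  exact sub_div_sqrt_le_arcsin_sub (pow_nonneg hq0 _) (pow_le_pow_of_le_one hq0 hq1 k.le_succ)
    (pow_le_one₀ hq0 hq1)

theorem mul_arcsin_sub_le_invRho (hq0 : 0 ≤ q) (hq1 : q < 1) (k : ℕ) :
    (1 + q) * (arcsin (q ^ (k + 1)) - arcsin (q ^ (k + 2))) ≤ invRho q k := by
  rw [invRho_eq]
  gcongr
  calc arcsin (q ^ (k + 1)) - arcsin (q ^ (k + 2))
      ≤ (q ^ (k + 1) - q ^ (k + 2)) / √(1 - (q ^ (k + 1)) ^ 2) :=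
        arcsin_sub_le_sub_div_sqrt (pow_nonneg hq0 _)
          (pow_le_pow_of_le_one hq0 hq1.le (k + 1).le_succ) (pow_lt_one₀ hq0 hq1 k.succ_ne_zero)
    _ ≤ (q ^ k - q ^ (k + 1)) / √(1 - (q ^ (k + 1)) ^ 2) := by
        refine div_le_div_of_nonneg_right ?_ (sqrt_nonneg _)
        have hk : q ^ (k + 1) ≤ q ^ k := pow_le_pow_of_le_one hq0 hq1.le k.le_succ
        calc q ^ (k + 1) - q ^ (k + 2) = q * (q ^ k - q ^ (k + 1)) := by ring
          _ ≤ q ^ k - q ^ (k + 1) := mul_le_of_le_one_left (sub_nonneg.2 hk) hq1.le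

theorem hasSum_arcsin_pow_sub (hq0 : 0 ≤ q) (hq1 : q < 1) (j : ℕ) :
    HasSum (fun k => arcsin (q ^ (k + j)) - arcsin (q ^ (k + 1 + j))) (arcsin (q ^ j)) := by
  have hlim : Tendsto (fun k => arcsin (q ^ (k + j))) atTop (𝓝 0) := by
    simpa [Function.comp_def] using (continuous_arcsin.tendsto 0).comp
      ((tendsto_pow_atTop_nhds_zero_of_lt_one hq0 hq1).comp (tendsto_add_atTop_nat j))
  simpa using hasSum_sub_succ_of_antitone
    (fun m n hmn => monotone_arcsin (pow_le_pow_of_le_one hq0 hq1.le (by omega))) hlim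

theorem summable_invRho (hq0 : 0 ≤ q) (hq1 : q < 1) : Summable (invRho q) := by
  refine Summable.of_nonneg_of_le (invRho_nonneg hq0 hq1.le)
    (invRho_le_mul_arcsin_sub hq0 hq1.le) ?_
  simpa using ((hasSum_arcsin_pow_sub hq0 hq1 0).mul_left (1 + q)).summable

theorem tsum_invRho_le (hq0 : 0 ≤ q) (hq1 : q < 1) : ∑' k, invRho q k ≤ (1 + q) * (π / 2) := by
  have := (hasSum_arcsin_pow_sub hq0 hq1 0).mul_left (1 + q)
  simp only [add_zero, pow_zero, arcsin_one] at this
  exact hasSum_le (invRho_le_mul_arcsin_sub hq0 hq1.le) (summable_invRho hq0 hq1).hasSum this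

theorem mul_arcsin_le_tsum_invRho (hq0 : 0 ≤ q) (hq1 : q < 1) :
    (1 + q) * arcsin q ≤ ∑' k, invRho q k := by
  have := (hasSum_arcsin_pow_sub hq0 hq1 1).mul_left (1 + q)
  simp only [pow_one] at this
  exact hasSum_le (mul_arcsin_sub_le_invRho hq0 hq1) this (summable_invRho hq0 hq1).hasSum

end invRho

theorem iotaImage_eq_image (q : ℝ) :
    iotaImage q = (· - π / 2) ''
      (range (fun n => ∑ k ∈ Finset.range n, invRho q k) ∪ {∑' k, invRho q k}) := by
  rw [Set.image_union, image_singleton, ← range_comp]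
  ext y
  simp [iotaImage, invRho, eq_comm]

theorem hausdorffDist_iotaImage_le {q : ℝ} (hq0 : 0 ≤ q) (hq1 : q < 1) :
    hausdorffDist (iotaImage q) (Icc (-(π / 2)) (π / 2)) ≤
      √(1 - q ^ 2) + (π - (1 + q) * arcsin q) := by
  have hIcc : Icc (-(π / 2)) (π / 2) = (· - π / 2) '' Icc 0 π := by
    rw [image_sub_const_Icc, zero_sub, sub_half]
  have hiso : Isometry (· - π / 2 : ℝ → ℝ) := (IsometryEquiv.subRight _).isometry
  rw [iotaImage_eq_image, hIcc, hausdorffDist_image hiso]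
  have hTπ : ∑' k, invRho q k ≤ π := (tsum_invRho_le hq0 hq1).trans (by nlinarith [pi_pos])
  refine (hausdorffDist_partialSums_Icc_le (invRho_nonneg hq0 hq1.le) (invRho_le_sqrt hq0 hq1)
    (summable_invRho hq0 hq1) hTπ).trans ?_
  linarith [mul_arcsin_le_tsum_invRho hq0 hq1]

/-- The Hausdorff distance in `ℝ` between `ι_q(X_q)` and the interval `[−π/2, π/2]` tends to
`0` as `q → 1⁻`. -/
theorem stmt_15 :
    Filter.Tendsto
      (fun q : ℝ =>
        Metric.hausdorffDist (iotaImage q) (Set.Icc (-(Real.pi / 2)) (Real.pi / 2)))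
      (nhdsWithin 1 (Set.Ioo 0 1)) (nhds 0) := by
  have hbound : Tendsto (fun q : ℝ => √(1 - q ^ 2) + (π - (1 + q) * arcsin q))
      (𝓝[Ioo 0 1] 1) (𝓝 0) := by
    have hcont : Continuous fun q : ℝ => √(1 - q ^ 2) + (π - (1 + q) * arcsin q) := by
      fun_prop
    convert hcont.continuousWithinAt.tendsto (s := Ioo 0 1) using 2
    norm_num
    ring
  refine tendsto_of_tendsto_of_tendsto_of_le_of_le' tendsto_const_nhds hbound
    (Eventually.of_forall fun q => hausdorffDist_nonneg) ?_
  filter_upwards [self_mem_nhdsWithin] with q hq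
  exact hausdorffDist_iotaImage_le hq.1.le hq.2
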